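/- arXiv:1406.0349 — 2 statements merged into one kernel-verified Lean document; each statement's English description precedes it below -/
import Mathlib

section
/- Let G = (Σ, V, S, P) be a context-free grammar in Chomsky normal form (every production has the form Z₀ → Z₁Z₂ with Z₁, Z₂ ∈ V, or Z₀ → b with b ∈ Σ) such that every nonempty word over Σ belongs to L(G). Then the expression e_G = φ₀ − (φ₁ ∪ φ₂ ∪ φ₃ ∪ φ₄ ∪ φ₅ ∪ φ₆ ∪ φ₇) over Γ_G = Σ ∪ V ∪ {α, ω, X}, where φ₀ = αΣω, φ₁ = αΣ(ω − α), φ₂ = α(Σα − α), φ₃ = ⋃_{Z₀→Z₁⋯Zₙ ∈ P} α(Z₁⋯Zₙ − Z₀)α, φ₄ = (α − αΣ)Sω, φ₅ = α(Σ − X)α, φ₆ = α(XX − X)α, φ₇ = α(XΣ ∩ Σ)α, is not finitely satisfiable: e_G(I) = ∅ for every finite structure I over Γ_G. -/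
/-- Syntax of the Downward Algebra (DA): expressions built from relation names
in a vocabulary `Γ` using union, intersection, difference, and composition. -/
inductive DA (Γ : Type) : Type where
  | var : Γ → DA Γ
  | union : DA Γ → DA Γ → DA Γ
  | inter : DA Γ → DA Γ → DA Γ
  | diff : DA Γ → DA Γ → DA Γ
  | comp : DA Γ → DA Γ → DA Γ

namespace DA

/-- Semantics: the binary relation `e(I)` defined by expression `e` in a structure `I`
(a structure over `Γ` with domain `D` assigns a binary relation on `D` to each name). -/
def eval {Γ D : Type} (I : Γ → D → D → Prop) : DA Γ → D → D → Prop
  | .var a => I a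
  | .union e f => fun x y => eval I e x y ∨ eval I f x y
  | .inter e f => fun x y => eval I e x y ∧ eval I f x y
  | .diff e f => fun x y => eval I e x y ∧ ¬ eval I f x y
  | .comp e f => fun x y => ∃ z, eval I e x z ∧ eval I f z y

/-- The difference degree of an expression. -/
def deg {Γ : Type} : DA Γ → ℕ
  | .var _ => 0
  | .union e f => max (deg e) (deg f)
  | .inter e f => max (deg e) (deg f)
  | .diff e f => max (deg e) (deg f) + 1
  | .comp e f => max (deg e) (deg f)

/-- A structure is finite when each relation is a finite binary relation. -/
def FiniteStruct {Γ D : Type} (I : Γ → D → D → Prop) : Prop :=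
  ∀ a, {p : D × D | I a p.1 p.2}.Finite

/-- An expression is finitely satisfiable if some finite structure makes it
evaluate to a nonempty relation. -/
def FinSat {Γ : Type} (e : DA Γ) : Prop :=
  ∃ (D : Type) (I : Γ → D → D → Prop), FiniteStruct I ∧ ∃ x y, eval I e x y

end DA

/-- The vocabulary Γ_G = Σ ∪ V ∪ {α, ω, X}: a relation name for every terminal,
a relation name for every nonterminal, and three fresh names α, ω, X. -/
inductive Voc (T N : Type) : Type where
  | term : T → Voc T N
  | nt : N → Voc T N
  | alpha : Voc T N
  | omega : Voc T N
  | X : Voc T N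

namespace DA

/-- Union of a nonempty list of expressions (head and tail). -/
def unionAll {Γ : Type} (e : DA Γ) (l : List (DA Γ)) : DA Γ := l.foldl .union e

/-- Composition of a nonempty list of expressions (head and tail). -/
def compAll {Γ : Type} (e : DA Γ) (l : List (DA Γ)) : DA Γ := l.foldl .comp e

end DA

/-- The expression Σ = ⋃_{b ∈ Σ} b, the union of all terminal relation names
(T is a nonempty finite type, so the match never takes the junk branch). -/
noncomputable def sigmaE (T N : Type) [Fintype T] : DA (Voc T N) :=
  match (Finset.univ (α := T)).toList with
  | [] => .var .alpha
  | b :: l => DA.unionAll (.var (.term b)) (l.map fun b' => .var (.term b'))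

/-- The relation name associated to a grammar symbol. -/
def symVoc {T N : Type} : Symbol T N → Voc T N
  | .terminal b => .term b
  | .nonterminal Z => .nt Z

/-- The member α(Z₁⋯Zₙ − Z₀)α of φ₃ contributed by a production Z₀ → Z₁⋯Zₙ
(the grammar has no empty production, so the junk branch for an empty
right-hand side is never taken). -/
def ruleExpr {T N : Type} (r : ContextFreeRule T N) : DA (Voc T N) :=
  .comp (.var .alpha)
    (.comp
      (.diff
        (match r.output with
         | [] => .var .X
         | s :: l => DA.compAll (.var (symVoc s)) (l.map fun s' => .var (symVoc s')))
        (.var (.nt r.input)))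
      (.var .alpha))

/-- The expression e_G = φ₀ − (φ₁ ∪ φ₂ ∪ φ₃ ∪ φ₄ ∪ φ₅ ∪ φ₆ ∪ φ₇) over Γ_G, where
φ₀ = αΣω, φ₁ = αΣ(ω − α), φ₂ = α(Σα − α), φ₃ = ⋃_{Z₀→Z₁⋯Zₙ ∈ P} α(Z₁⋯Zₙ − Z₀)α,
φ₄ = (α − αΣ)Sω, φ₅ = α(Σ − X)α, φ₆ = α(XX − X)α, φ₇ = α(XΣ ∩ Σ)α. -/
noncomputable def eG (T : Type) [Fintype T] (G : ContextFreeGrammar T) : DA (Voc T G.NT) :=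
  let av : DA (Voc T G.NT) := .var .alpha
  let ov : DA (Voc T G.NT) := .var .omega
  let Xv : DA (Voc T G.NT) := .var .X
  let Sv : DA (Voc T G.NT) := .var (.nt G.initial)
  let Se : DA (Voc T G.NT) := sigmaE T G.NT
  let f0 := DA.comp av (DA.comp Se ov)
  let f1 := DA.comp av (DA.comp Se (.diff ov av))
  let f2 := DA.comp av (.diff (DA.comp Se av) av)
  let f4 := DA.comp (.diff av (DA.comp av Se)) (DA.comp Sv ov)
  let f5 := DA.comp av (DA.comp (.diff Se Xv) av)
  let f6 := DA.comp av (DA.comp (.diff (DA.comp Xv Xv) Xv) av)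
  let f7 := DA.comp av (DA.comp (.inter (DA.comp Xv Se) Se) av)
  .diff f0
    (DA.unionAll (.union f1 (.union f2 (.union f4 (.union f5 (.union f6 f7)))))
      (G.rules.toList.map ruleExpr))


/-!
Suppose `(x, y) ∈ e_G(I)` and call `m` marked when `α(x, m)` and `α(m, y)`. By `¬φ₃` every
production is sound on paths whose inner points are marked; since every nonempty word is
derivable from `S`, a marked `u` that spells a nonempty word along such a path into the
endpoint `v₀` of the `φ₀`-witness satisfies `S(u, v₀)`. Then `¬φ₄` and `¬φ₂` give a marked
`Σ`-predecessor of `u` with the same property. By `¬φ₅` and `¬φ₆`, `X` contains `Σ` and is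
transitive on these points, which are finitely many α-successors of `x`; so `X(a, a)` for one
of them, and `¬φ₇` forbids this.
-/

theorem Set.Finite.exists_rel_self_of_forall_exists_rel {α : Type*} {s : Set α}
    {r : α → α → Prop} (hs : s.Finite) (hne : s.Nonempty)
    (htrans : ∀ a ∈ s, ∀ b ∈ s, ∀ c ∈ s, r a b → r b c → r a c)
    (hpred : ∀ b ∈ s, ∃ a ∈ s, r a b) : ∃ a ∈ s, r a a := by
  by_contra! hirrefl
  have : Finite s := hs
  let r' : s → s → Prop := fun a b => r a b
  have : IsTrans s r' := ⟨fun a b c => htrans a a.2 b b.2 c c.2⟩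
  have : Std.Irrefl r' := ⟨fun a => hirrefl a a.2⟩
  obtain ⟨m, -, hmin⟩ :=
    (Finite.wellFounded_of_trans_of_irrefl r').has_min Set.univ ⟨⟨_, hne.some_mem⟩, trivial⟩
  obtain ⟨a, ha, ham⟩ := hpred m m.2
  exact hmin ⟨a, ha⟩ trivial ham

namespace DA

variable {Γ D : Type} {I : Γ → D → D → Prop}

theorem eval_unionAll {e : DA Γ} {l : List (DA Γ)} {u v : D} :
    eval I (unionAll e l) u v ↔ eval I e u v ∨ ∃ f ∈ l, eval I f u v := by
  induction l generalizing e with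
  | nil => simp [unionAll]
  | cons f l ih =>
    change eval I (unionAll (.union e f) l) u v ↔ _
    simp only [ih, eval, List.mem_cons, exists_eq_or_imp, or_assoc]

end DA

theorem eval_sigmaE {T N D : Type} [Fintype T] [Nonempty T] {I : Voc T N → D → D → Prop}
    {u v : D} : DA.eval I (sigmaE T N) u v ↔ ∃ b : T, I (.term b) u v := by
  unfold sigmaE
  split
  next hnil => exact absurd (Finset.toList_eq_nil.mp hnil) Finset.univ_nonempty.ne_empty
  next b l hbl =>
    have hmem : ∀ b', b' ∈ b :: l := fun b' => hbl ▸ Finset.mem_toList.mpr (Finset.mem_univ b')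
    simp only [DA.eval_unionAll, List.mem_map, exists_exists_and_eq_and, DA.eval]
    refine ⟨fun h => h.elim (fun hb => ⟨b, hb⟩) fun ⟨b', _, hb'⟩ => ⟨b', hb'⟩, fun ⟨b', hb'⟩ => ?_⟩
    rcases List.mem_cons.mp (hmem b') with rfl | hl
    · exact Or.inl hb'
    · exact Or.inr ⟨b', hl, hb'⟩

section MarkedPath

variable {T N D : Type} {I : Voc T N → D → D → Prop} {x y : D}

def Marked (I : Voc T N → D → D → Prop) (x y m : D) : Prop :=
  I .alpha x m ∧ I .alpha m y

def MarkedPath (I : Voc T N → D → D → Prop) (x y : D) : List (Symbol T N) → D → D → Prop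
  | [], u, v => u = v
  | [s], u, v => I (symVoc s) u v
  | s :: s' :: w, u, v => ∃ m, I (symVoc s) u m ∧ Marked I x y m ∧ MarkedPath I x y (s' :: w) m v

theorem markedPath_cons {s : Symbol T N} {w : List (Symbol T N)} (hw : w ≠ []) {u v : D} :
    MarkedPath I x y (s :: w) u v ↔
      ∃ m, I (symVoc s) u m ∧ Marked I x y m ∧ MarkedPath I x y w m v := by
  obtain ⟨s', w, rfl⟩ := List.exists_cons_of_ne_nil hw
  rfl

theorem markedPath_append {w w' : List (Symbol T N)} (hw : w ≠ []) (hw' : w' ≠ []) {u v : D} :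
    MarkedPath I x y (w ++ w') u v ↔
      ∃ m, MarkedPath I x y w u m ∧ Marked I x y m ∧ MarkedPath I x y w' m v := by
  induction w generalizing u with
  | nil => exact absurd rfl hw
  | cons s w ih =>
    rcases eq_or_ne w [] with rfl | hw₀
    · exact markedPath_cons hw'
    · rw [List.cons_append, markedPath_cons (by simp [hw₀])]
      simp only [ih hw₀, markedPath_cons hw₀]
      exact ⟨fun ⟨m, hs, hm, m', hp, hm', hp'⟩ => ⟨m', ⟨m, hs, hm, hp⟩, hm', hp'⟩,
        fun ⟨m', ⟨m, hs, hm, hp⟩, hm', hp'⟩ => ⟨m, hs, hm, m', hp, hm', hp'⟩⟩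

theorem exists_alpha_of_markedPath_cons {s : Symbol T N} {w : List (Symbol T N)} {u v : D}
    (hp : MarkedPath I x y (s :: w) u v) (hv : I .alpha v y) :
    ∃ m, I (symVoc s) u m ∧ I .alpha m y := by
  rcases eq_or_ne w [] with rfl | hw
  · exact ⟨v, hp, hv⟩
  · obtain ⟨m, hs, hm, -⟩ := (markedPath_cons hw).mp hp
    exact ⟨m, hs, hm.2⟩

theorem DA.eval_compAll_of_markedPath {e : DA (Voc T N)} {w : List (Symbol T N)} {u m v : D}
    (he : DA.eval I e u m) (hp : MarkedPath I x y w m v) :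
    DA.eval I (DA.compAll e (w.map fun s => .var (symVoc s))) u v := by
  induction w generalizing e m with
  | nil => exact (hp : m = v) ▸ he
  | cons s w ih =>
    rcases eq_or_ne w [] with rfl | hw
    · exact ⟨m, he, hp⟩
    · obtain ⟨m', hs, -, hp'⟩ := (markedPath_cons hw).mp hp
      exact ih ⟨m, he, hs⟩ hp'

/-- What `¬φ₃` says about the production `r`. -/
def RespectsRule (I : Voc T N → D → D → Prop) (x y : D) (r : ContextFreeRule T N) : Prop :=
  ∀ u v, I .alpha x u → I .alpha v y → MarkedPath I x y r.output u v → I (.nt r.input) u v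

theorem markedPath_of_rewrites {r : ContextFreeRule T N} (hr : r.output ≠ [])
    (hresp : RespectsRule I x y r) {w w' : List (Symbol T N)} (hww' : r.Rewrites w w')
    {u v : D} (hu : I .alpha x u) (hv : I .alpha v y) (hp : MarkedPath I x y w' u v) :
    MarkedPath I x y w u v := by
  induction hww' generalizing u with
  | head w =>
    rcases eq_or_ne w [] with rfl | hw
    · exact hresp u v hu hv (by simpa using hp)
    · obtain ⟨m, hpr, hm, hpw⟩ := (markedPath_append hr hw).mp hp
      exact (markedPath_cons hw).mpr ⟨m, hresp u m hu hm.2 hpr, hm, hpw⟩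
  | @cons s w₁ w₂ hw ih =>
    have hw₁ : w₁ ≠ [] := List.ne_nil_of_mem hw.nonterminal_input_mem
    have hw₂ : w₂ ≠ [] := by
      obtain ⟨p, q, -, rfl⟩ := hw.exists_parts
      simp [hr]
    obtain ⟨m, hs, hm, hp'⟩ := (markedPath_cons hw₂).mp hp
    exact (markedPath_cons hw₁).mpr ⟨m, hs, hm, ih hm.1 hp'⟩

theorem markedPath_of_derives {T D : Type} {G : ContextFreeGrammar T}
    {I : Voc T G.NT → D → D → Prop} {x y : D} (hε : ∀ r ∈ G.rules, r.output ≠ [])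
    (hresp : ∀ r ∈ G.rules, RespectsRule I x y r) {w w' : List (Symbol T G.NT)}
    (hww' : G.Derives w w') {u v : D} (hu : I .alpha x u) (hv : I .alpha v y)
    (hp : MarkedPath I x y w' u v) : MarkedPath I x y w u v := by
  induction hww' using Relation.ReflTransGen.head_induction_on with
  | refl => exact hp
  | head hstep _ ih =>
    obtain ⟨r, hr, hrw⟩ := hstep
    exact markedPath_of_rewrites (hε r hr) (hresp r hr) hrw hu hv ih

def WordReaches (I : Voc T N → D → D → Prop) (x y u v : D) : Prop :=
  Marked I x y u ∧ ∃ w : List T, w ≠ [] ∧ MarkedPath I x y (w.map Symbol.terminal) u v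

end MarkedPath

theorem eval_ruleExpr {T N D : Type} {I : Voc T N → D → D → Prop} {x y u v : D}
    {r : ContextFreeRule T N} (hr : r.output ≠ []) (hu : I .alpha x u) (hv : I .alpha v y)
    (hp : MarkedPath I x y r.output u v) (hZ : ¬ I (.nt r.input) u v) :
    DA.eval I (ruleExpr r) x y := by
  obtain ⟨Z, _ | ⟨s, w⟩⟩ := r
  · exact absurd rfl hr
  · refine ⟨u, hu, v, ⟨?_, hZ⟩, hv⟩
    rcases eq_or_ne w [] with rfl | hw
    · exact hp
    · obtain ⟨m, hs, -, hp'⟩ := (markedPath_cons hw).mp hp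
      exact DA.eval_compAll_of_markedPath hs hp'

namespace eG

variable {T : Type} [Fintype T] {G : ContextFreeGrammar T} {D : Type}
  {I : Voc T G.NT → D → D → Prop} {x y u v : D}

local notation "Sig" => DA.eval I (sigmaE T G.NT)

theorem exists_of_eval (h : DA.eval I (eG T G) x y) :
    ∃ u v, I .alpha x u ∧ Sig u v ∧ I .omega v y :=
  let ⟨u, hu, v, huv, hv⟩ := h.1
  ⟨u, v, hu, huv, hv⟩

theorem alpha_of_omega (h : DA.eval I (eG T G) x y) (hu : I .alpha x u) (huv : Sig u v)
    (hv : I .omega v y) : I .alpha v y := by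
  by_contra hv'
  exact h.2 (DA.eval_unionAll.mpr (.inl (.inl ⟨u, hu, v, huv, hv, hv'⟩)))

theorem alpha_of_sigma (h : DA.eval I (eG T G) x y) (hu : I .alpha x u) (huv : Sig u v)
    (hv : I .alpha v y) : I .alpha u y := by
  by_contra hu'
  exact h.2 (DA.eval_unionAll.mpr (.inl (.inr (.inl ⟨u, hu, ⟨v, huv, hv⟩, hu'⟩))))

theorem exists_sigma_of_initial (h : DA.eval I (eG T G) x y) (hu : I .alpha x u)
    (huv : I (.nt G.initial) u v) (hv : I .omega v y) : ∃ w, I .alpha x w ∧ Sig w u := by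
  by_contra! hw
  exact h.2 (DA.eval_unionAll.mpr (.inl (.inr (.inr (.inl ⟨u, ⟨hu, fun ⟨w, hxw, hwu⟩ =>
    hw w hxw hwu⟩, v, huv, hv⟩)))))

theorem X_of_sigma (h : DA.eval I (eG T G) x y) (hu : I .alpha x u) (huv : Sig u v)
    (hv : I .alpha v y) : I .X u v := by
  by_contra hX
  exact h.2 (DA.eval_unionAll.mpr (.inl (.inr (.inr (.inr (.inl ⟨u, hu, v, ⟨huv, hX⟩, hv⟩))))))

theorem X_trans {m : D} (h : DA.eval I (eG T G) x y) (hu : I .alpha x u) (hum : I .X u m)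
    (hmv : I .X m v) (hv : I .alpha v y) : I .X u v := by
  by_contra hX
  exact h.2 (DA.eval_unionAll.mpr
    (.inl (.inr (.inr (.inr (.inr (.inl ⟨u, hu, v, ⟨⟨m, hum, hmv⟩, hX⟩, hv⟩)))))))

theorem not_X_self (h : DA.eval I (eG T G) x y) (hu : I .alpha x u) (huv : Sig u v)
    (hv : I .alpha v y) : ¬ I .X u u := fun hX =>
  h.2 (DA.eval_unionAll.mpr
    (.inl (.inr (.inr (.inr (.inr (.inr ⟨u, hu, v, ⟨⟨u, hX, huv⟩, huv⟩, hv⟩)))))))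

theorem respectsRule (h : DA.eval I (eG T G) x y) {r : ContextFreeRule T G.NT}
    (hrG : r ∈ G.rules) (hr : r.output ≠ []) : RespectsRule I x y r := by
  intro u v hu hv hp
  by_contra hZ
  exact h.2 (DA.eval_unionAll.mpr (.inr ⟨ruleExpr r,
    List.mem_map_of_mem (Finset.mem_toList.mpr hrG), eval_ruleExpr hr hu hv hp hZ⟩))

theorem exists_sigma_of_wordReaches [Nonempty T] (hαv : I .alpha v y)
    (hu : WordReaches I x y u v) : ∃ m, Sig u m ∧ I .alpha m y := by
  obtain ⟨-, _ | ⟨b, word⟩, hword, hp⟩ := hu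
  · exact absurd rfl hword
  · obtain ⟨m, hb, hm⟩ := exists_alpha_of_markedPath_cons hp hαv
    exact ⟨m, eval_sigmaE.mpr ⟨b, hb⟩, hm⟩

/-- The grammar derives the word from `S`, so `S(u, v)` holds, and `¬φ₄` yields the
predecessor. -/
theorem exists_wordReaches_sigma [Nonempty T] (h : DA.eval I (eG T G) x y)
    (hε : ∀ r ∈ G.rules, r.output ≠ []) (huniv : ∀ w : List T, w ≠ [] → w ∈ G.language)
    (hαv : I .alpha v y) (hωv : I .omega v y) (hu : WordReaches I x y u v) :
    ∃ w, WordReaches I x y w v ∧ Sig w u := by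
  obtain ⟨hum, word, hword, hp⟩ := hu
  have hS : I (.nt G.initial) u v :=
    markedPath_of_derives hε (fun r hr => respectsRule h hr (hε r hr))
      ((G.mem_language_iff word).mp (huniv word hword)) hum.1 hαv hp
  obtain ⟨w, hxw, hwu⟩ := exists_sigma_of_initial h hum.1 hS hωv
  obtain ⟨b, hb⟩ := eval_sigmaE.mp hwu
  refine ⟨w, ⟨⟨hxw, alpha_of_sigma h hxw hwu hum.2⟩, b :: word, List.cons_ne_nil _ _, ?_⟩, hwu⟩
  exact (markedPath_cons (by simpa using hword)).mpr ⟨u, hb, hum, hp⟩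

end eG

/-- If G is a context-free grammar in Chomsky normal form (every production is of
the form Z₀ → Z₁Z₂ with nonterminals Z₁, Z₂, or Z₀ → b with a terminal b) such that
every nonempty word over Σ belongs to L(G), then e_G is not finitely satisfiable:
e_G evaluates to the empty relation in every finite structure over Γ_G. -/
theorem stmt4 (T : Type) [Fintype T] [Nonempty T] (G : ContextFreeGrammar T)
    (hCNF : ∀ r ∈ G.rules,
      (∃ Z₁ Z₂ : G.NT, r.output = [Symbol.nonterminal Z₁, Symbol.nonterminal Z₂]) ∨
      (∃ b : T, r.output = [Symbol.terminal b]))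
    (huniv : ∀ w : List T, w ≠ [] → w ∈ G.language)
    (D : Type) (I : Voc T G.NT → D → D → Prop) (hfin : DA.FiniteStruct I)
    (x y : D) :
    ¬ DA.eval I (eG T G) x y := by
  intro h
  have hε : ∀ r ∈ G.rules, r.output ≠ [] := fun r hr => by
    rcases hCNF r hr with ⟨_, _, hout⟩ | ⟨_, hout⟩ <;> simp [hout]
  obtain ⟨u₀, v₀, hxu₀, hu₀v₀, hω⟩ := eG.exists_of_eval h
  have hαv₀ : I .alpha v₀ y := eG.alpha_of_omega h hxu₀ hu₀v₀ hω
  have hu₀ : WordReaches I x y u₀ v₀ := by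
    obtain ⟨b, hb⟩ := eval_sigmaE.mp hu₀v₀
    exact ⟨⟨hxu₀, eG.alpha_of_sigma h hxu₀ hu₀v₀ hαv₀⟩, [b], List.cons_ne_nil _ _, hb⟩
  have hfinite : {u | WordReaches I x y u v₀}.Finite :=
    ((hfin .alpha).image Prod.snd).subset fun u hu => ⟨(x, u), hu.1.1, rfl⟩
  obtain ⟨a, ha, haa⟩ := hfinite.exists_rel_self_of_forall_exists_rel (r := I .X) ⟨u₀, hu₀⟩
    (fun a ha _ _ c hc hab hbc => eG.X_trans h ha.1.1 hab hbc hc.1.2)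
    (fun u hu => by
      obtain ⟨w, hw, hwu⟩ := eG.exists_wordReaches_sigma h hε huniv hαv₀ hω hu
      exact ⟨w, hw, eG.X_of_sigma h hw.1.1 hwu hu.1.2⟩)
  obtain ⟨m, ham, hm⟩ := eG.exists_sigma_of_wordReaches hαv₀ ha
  exact eG.not_X_self h ha.1.1 ham hm haa
end

section
/- Let e be a DA expression over the two-element vocabulary {b, c}, let a be a third symbol, and let ê be the expression over {a} obtained from e by replacing every occurrence of b by a(a ∩ a²)a and every occurrence of c by a(a ∩ a³)a. Then e is finitely satisfiable if and only if ê is finitely satisfiable. -/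
namespace DA

/-- Substituting an expression for each relation name. -/
def subst {Γ Δ : Type} (σ : Γ → DA Δ) : DA Γ → DA Δ
  | .var a => σ a
  | .union e f => .union (subst σ e) (subst σ f)
  | .inter e f => .inter (subst σ e) (subst σ f)
  | .diff e f => .diff (subst σ e) (subst σ f)
  | .comp e f => .comp (subst σ e) (subst σ f)

/-- pow1 e n is the (n+1)-fold composition e ⋯ e, i.e. e^(n+1). -/
def pow1 {Γ : Type} (e : DA Γ) : ℕ → DA Γ
  | 0 => e
  | n + 1 => .comp e (pow1 e n)

end DA

/-- The vocabulary with two relation names b and c. -/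
inductive BC : Type where
  | b : BC
  | c : BC

/-- The substitution over the single relation name a (modelled by Unit) sending
b to a(a ∩ a²)a and c to a(a ∩ a³)a. -/
def hatSub : BC → DA Unit
  | .b => .comp (.var ())
      (.comp (.inter (.var ()) (DA.pow1 (.var ()) 1)) (.var ()))
  | .c => .comp (.var ())
      (.comp (.inter (.var ()) (DA.pow1 (.var ()) 2)) (.var ()))

/-! ### Auxiliary material for the proof -/

namespace DA

theorem eval_subst' {Γ Δ D : Type} (I : Δ → D → D → Prop) (σ : Γ → DA Δ) (e : DA Γ) :
    ∀ x y, eval I (subst σ e) x y ↔ eval (fun g => eval I (σ g)) e x y := by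
  induction e with
  | var a => intro x y; rfl
  | union e f ih ih2 => intro x y; simp only [subst, eval, ih, ih2]
  | inter e f ih ih2 => intro x y; simp only [subst, eval, ih, ih2]
  | diff e f ih ih2 => intro x y; simp only [subst, eval, ih, ih2]
  | comp e f ih ih2 => intro x y; simp only [subst, eval, ih, ih2]

theorem eval_finite' {Γ D : Type} {I : Γ → D → D → Prop} (hI : FiniteStruct I) (e : DA Γ) :
    {p : D × D | eval I e p.1 p.2}.Finite := by
  induction e with
  | var a => exact hI a
  | union e f ih ih2 =>
      exact (ih.union ih2).subset (by rintro ⟨x,y⟩ (h|h); exacts [Or.inl h, Or.inr h])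
  | inter e f ih ih2 => exact ih.subset (fun p hp => hp.1)
  | diff e f ih ih2 => exact ih.subset (fun p hp => hp.1)
  | comp e f ih ih2 =>
      apply Set.Finite.subset ((ih.image Prod.fst).prod (ih2.image Prod.snd))
      rintro ⟨x,y⟩ ⟨z, hz1, hz2⟩
      exact ⟨⟨(x,z), hz1, rfl⟩, ⟨(z,y), hz2, rfl⟩⟩

theorem eval_embed' {Γ D D' : Type} (I : Γ → D → D → Prop) (I' : Γ → D' → D' → Prop)
    (ι : D → D') (hι : Function.Injective ι)
    (h : ∀ g p q, I' g p q ↔ ∃ x y, I g x y ∧ p = ι x ∧ q = ι y) (e : DA Γ) :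
    ∀ p q, eval I' e p q ↔ ∃ x y, eval I e x y ∧ p = ι x ∧ q = ι y := by
  induction e with
  | var a => exact h a
  | union e f ih ih2 =>
      intro p q
      simp only [eval, ih, ih2]
      constructor
      · rintro (⟨x,y,hh,rfl,rfl⟩|⟨x,y,hh,rfl,rfl⟩)
        exacts [⟨x,y,Or.inl hh,rfl,rfl⟩, ⟨x,y,Or.inr hh,rfl,rfl⟩]
      · rintro ⟨x,y,(hh|hh),rfl,rfl⟩
        exacts [Or.inl ⟨x,y,hh,rfl,rfl⟩, Or.inr ⟨x,y,hh,rfl,rfl⟩]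
  | inter e f ih ih2 =>
      intro p q
      simp only [eval, ih, ih2]
      constructor
      · rintro ⟨⟨x,y,hh,rfl,rfl⟩, ⟨x',y',hh',hx,hy⟩⟩
        obtain rfl := hι hx; obtain rfl := hι hy
        exact ⟨x,y,⟨hh,hh'⟩,rfl,rfl⟩
      · rintro ⟨x,y,⟨h1,h2⟩,rfl,rfl⟩
        exact ⟨⟨x,y,h1,rfl,rfl⟩, ⟨x,y,h2,rfl,rfl⟩⟩
  | diff e f ih ih2 =>
      intro p q
      simp only [eval, ih, ih2]
      constructor
      · rintro ⟨⟨x,y,hh,rfl,rfl⟩, hn⟩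
        exact ⟨x,y,⟨hh, fun hf => hn ⟨x,y,hf,rfl,rfl⟩⟩,rfl,rfl⟩
      · rintro ⟨x,y,⟨h1,h2⟩,rfl,rfl⟩
        refine ⟨⟨x,y,h1,rfl,rfl⟩, ?_⟩
        rintro ⟨x',y',hf,hx,hy⟩
        obtain rfl := hι hx; obtain rfl := hι hy
        exact h2 hf
  | comp e f ih ih2 =>
      intro p q
      simp only [eval, ih, ih2]
      constructor
      · rintro ⟨z, ⟨x,y,hh,rfl,rfl⟩, ⟨y',y2,hh',hy,rfl⟩⟩
        obtain rfl := hι hy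
        exact ⟨x,y2,⟨y,hh,hh'⟩,rfl,rfl⟩
      · rintro ⟨x,y,⟨z,h1,h2⟩,rfl,rfl⟩
        exact ⟨ι z, ⟨x,z,h1,rfl,rfl⟩, ⟨z,y,h2,rfl,rfl⟩⟩

end DA

/-- Kinds of fresh gadget points. -/
inductive Gk : Type where
  | u | v | w | u' | v' | w1 | w2

/-- The single relation of the gadget structure: each b-edge (x,y) becomes a path
x → u → v → y with a shortcut u → w → v (so (u,v) ∈ a ∩ a²), and each c-edge becomes
x → u' → v' → y with a shortcut u' → w1 → w2 → v' (so (u',v') ∈ a ∩ a³). -/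
inductive Edge {D : Type} (I : BC → D → D → Prop) :
    (D ⊕ (D × D × Gk)) → (D ⊕ (D × D × Gk)) → Prop where
  | bxu {x y} : I .b x y → Edge I (.inl x) (.inr (x,y,.u))
  | buv {x y} : I .b x y → Edge I (.inr (x,y,.u)) (.inr (x,y,.v))
  | buw {x y} : I .b x y → Edge I (.inr (x,y,.u)) (.inr (x,y,.w))
  | bwv {x y} : I .b x y → Edge I (.inr (x,y,.w)) (.inr (x,y,.v))
  | bvy {x y} : I .b x y → Edge I (.inr (x,y,.v)) (.inl y)
  | cxu {x y} : I .c x y → Edge I (.inl x) (.inr (x,y,.u'))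
  | cuv {x y} : I .c x y → Edge I (.inr (x,y,.u')) (.inr (x,y,.v'))
  | cuw {x y} : I .c x y → Edge I (.inr (x,y,.u')) (.inr (x,y,.w1))
  | cww {x y} : I .c x y → Edge I (.inr (x,y,.w1)) (.inr (x,y,.w2))
  | cwv {x y} : I .c x y → Edge I (.inr (x,y,.w2)) (.inr (x,y,.v'))
  | cvy {x y} : I .c x y → Edge I (.inr (x,y,.v')) (.inl y)

section Gadget

variable {D : Type} {I : BC → D → D → Prop}

theorem inter2 {p q : D ⊕ (D × D × Gk)} :
    (Edge I p q ∧ ∃ r, Edge I p r ∧ Edge I r q) ↔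
      ∃ x y, I .b x y ∧ p = .inr (x,y,.u) ∧ q = .inr (x,y,.v) := by
  constructor
  · rintro ⟨hpq, r, h1, h2⟩
    cases hpq <;> cases h1 <;> cases h2 <;>
      first
        | (exact ⟨_, _, by assumption, rfl, rfl⟩)
        | simp_all
  · rintro ⟨x, y, hb, rfl, rfl⟩
    exact ⟨.buv hb, _, .buw hb, .bwv hb⟩

theorem inter3 {p q : D ⊕ (D × D × Gk)} :
    (Edge I p q ∧ ∃ r s, Edge I p r ∧ Edge I r s ∧ Edge I s q) ↔
      ∃ x y, I .c x y ∧ p = .inr (x,y,.u') ∧ q = .inr (x,y,.v') := by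
  constructor
  · rintro ⟨hpq, r, s, h1, h2, h3⟩
    cases hpq <;> cases h1 <;> cases h2 <;> cases h3 <;>
      first
        | (exact ⟨_, _, by assumption, rfl, rfl⟩)
        | simp_all
  · rintro ⟨x, y, hc, rfl, rfl⟩
    exact ⟨.cuv hc, _, _, .cuw hc, .cww hc, .cwv hc⟩

theorem edge_to_u {p : D ⊕ (D × D × Gk)} {x y : D} :
    Edge I p (.inr (x,y,.u)) ↔ p = .inl x ∧ I .b x y := by
  constructor
  · intro h; cases h; exact ⟨rfl, by assumption⟩
  · rintro ⟨rfl, hb⟩; exact .bxu hb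

theorem edge_from_v {q : D ⊕ (D × D × Gk)} {x y : D} :
    Edge I (.inr (x,y,.v)) q ↔ q = .inl y ∧ I .b x y := by
  constructor
  · intro h; cases h; exact ⟨rfl, by assumption⟩
  · rintro ⟨rfl, hb⟩; exact .bvy hb

theorem edge_to_u' {p : D ⊕ (D × D × Gk)} {x y : D} :
    Edge I p (.inr (x,y,.u')) ↔ p = .inl x ∧ I .c x y := by
  constructor
  · intro h; cases h; exact ⟨rfl, by assumption⟩
  · rintro ⟨rfl, hc⟩; exact .cxu hc

theorem edge_from_v' {q : D ⊕ (D × D × Gk)} {x y : D} :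
    Edge I (.inr (x,y,.v')) q ↔ q = .inl y ∧ I .c x y := by
  constructor
  · intro h; cases h; exact ⟨rfl, by assumption⟩
  · rintro ⟨rfl, hc⟩; exact .cvy hc

/-- Characterization of the evaluation of the hat expressions on the gadget structure. -/
theorem evalJ (g : BC) (p q : D ⊕ (D × D × Gk)) :
    DA.eval (fun _ : Unit => Edge I) (hatSub g) p q ↔
      ∃ x y, I g x y ∧ p = .inl x ∧ q = .inl y := by
  cases g with
  | b =>
      simp only [hatSub, DA.pow1, DA.eval]
      constructor
      · rintro ⟨r, h1, s, ⟨hrs, z, hz1, hz2⟩, h2⟩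
        obtain ⟨x, y, hb, rfl, rfl⟩ := inter2.mp ⟨hrs, z, hz1, hz2⟩
        obtain ⟨rfl, -⟩ := edge_to_u.mp h1
        obtain ⟨rfl, -⟩ := edge_from_v.mp h2
        exact ⟨x, y, hb, rfl, rfl⟩
      · rintro ⟨x, y, hb, rfl, rfl⟩
        exact ⟨_, .bxu hb, _, ⟨.buv hb, _, .buw hb, .bwv hb⟩, .bvy hb⟩
  | c =>
      simp only [hatSub, DA.pow1, DA.eval]
      constructor
      · rintro ⟨r, h1, s, ⟨hrs, z, hz1, z2, hz2, hz3⟩, h2⟩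
        obtain ⟨x, y, hc, rfl, rfl⟩ := inter3.mp ⟨hrs, z, z2, hz1, hz2, hz3⟩
        obtain ⟨rfl, -⟩ := edge_to_u'.mp h1
        obtain ⟨rfl, -⟩ := edge_from_v'.mp h2
        exact ⟨x, y, hc, rfl, rfl⟩
      · rintro ⟨x, y, hc, rfl, rfl⟩
        exact ⟨_, .cxu hc, _, ⟨.cuv hc, _, .cuw hc, _, .cww hc, .cwv hc⟩, .cvy hc⟩

/-- The 11 possible edge shapes produced from a source pair. -/
def edgeSet (xy : D × D) :
    Set ((D ⊕ (D × D × Gk)) × (D ⊕ (D × D × Gk))) :=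
  let x := xy.1; let y := xy.2
  {(.inl x, .inr (x,y,.u)), (.inr (x,y,.u), .inr (x,y,.v)),
   (.inr (x,y,.u), .inr (x,y,.w)), (.inr (x,y,.w), .inr (x,y,.v)),
   (.inr (x,y,.v), .inl y), (.inl x, .inr (x,y,.u')),
   (.inr (x,y,.u'), .inr (x,y,.v')), (.inr (x,y,.u'), .inr (x,y,.w1)),
   (.inr (x,y,.w1), .inr (x,y,.w2)), (.inr (x,y,.w2), .inr (x,y,.v')),
   (.inr (x,y,.v'), .inl y)}

theorem edgeSet_finite (xy : D × D) : (edgeSet xy).Finite := by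
  unfold edgeSet
  simp only []
  apply Set.Finite.insert; apply Set.Finite.insert; apply Set.Finite.insert
  apply Set.Finite.insert; apply Set.Finite.insert; apply Set.Finite.insert
  apply Set.Finite.insert; apply Set.Finite.insert; apply Set.Finite.insert
  apply Set.Finite.insert; exact Set.finite_singleton _

theorem edge_finite
    (hb : {p : D × D | I .b p.1 p.2}.Finite) (hc : {p : D × D | I .c p.1 p.2}.Finite) :
    {p : (D ⊕ (D × D × Gk)) × (D ⊕ (D × D × Gk)) | Edge I p.1 p.2}.Finite := by
  apply Set.Finite.subset (Set.Finite.biUnion (hb.union hc) (fun xy _ => edgeSet_finite xy))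
  rintro ⟨p, q⟩ h
  cases h with
  | @bxu x0 y0 h => exact Set.mem_biUnion (x := (x0,y0)) (Or.inl h) (by simp [edgeSet])
  | @buv x0 y0 h => exact Set.mem_biUnion (x := (x0,y0)) (Or.inl h) (by simp [edgeSet])
  | @buw x0 y0 h => exact Set.mem_biUnion (x := (x0,y0)) (Or.inl h) (by simp [edgeSet])
  | @bwv x0 y0 h => exact Set.mem_biUnion (x := (x0,y0)) (Or.inl h) (by simp [edgeSet])
  | @bvy x0 y0 h => exact Set.mem_biUnion (x := (x0,y0)) (Or.inl h) (by simp [edgeSet])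
  | @cxu x0 y0 h => exact Set.mem_biUnion (x := (x0,y0)) (Or.inr h) (by simp [edgeSet])
  | @cuv x0 y0 h => exact Set.mem_biUnion (x := (x0,y0)) (Or.inr h) (by simp [edgeSet])
  | @cuw x0 y0 h => exact Set.mem_biUnion (x := (x0,y0)) (Or.inr h) (by simp [edgeSet])
  | @cww x0 y0 h => exact Set.mem_biUnion (x := (x0,y0)) (Or.inr h) (by simp [edgeSet])
  | @cwv x0 y0 h => exact Set.mem_biUnion (x := (x0,y0)) (Or.inr h) (by simp [edgeSet])
  | @cvy x0 y0 h => exact Set.mem_biUnion (x := (x0,y0)) (Or.inr h) (by simp [edgeSet])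

end Gadget

/-- For e over {b,c}, let ê over {a} replace every b by a(a ∩ a²)a and every c by
a(a ∩ a³)a.  Then e is finitely satisfiable iff ê is. -/
theorem stmt8 (e : DA BC) :
    DA.FinSat e ↔ DA.FinSat (DA.subst hatSub e) := by
  constructor
  · rintro ⟨D, I, hI, x, y, hxy⟩
    refine ⟨D ⊕ (D × D × Gk), fun _ => Edge I, fun _ => edge_finite (hI .b) (hI .c),
      Sum.inl x, Sum.inl y, ?_⟩
    rw [DA.eval_subst']
    have hemb := DA.eval_embed' I (fun g => DA.eval (fun _ : Unit => Edge I) (hatSub g))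
      Sum.inl Sum.inl_injective (fun g p q => evalJ g p q) e
    exact (hemb _ _).mpr ⟨x, y, hxy, rfl, rfl⟩
  · rintro ⟨D, J, hJ, x, y, hxy⟩
    refine ⟨D, fun g => DA.eval J (hatSub g), fun g => DA.eval_finite' hJ (hatSub g),
      x, y, ?_⟩
    exact (DA.eval_subst' J hatSub e x y).mp hxy
end
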